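/- Let 𝔠 be a category and let ↑𝔠 be its arrow extension. A 𝔠-arrow α : a → a' is a Ramsey arrow in 𝔠 if and only if (a, α) is a Ramsey object of ↑𝔠, i.e. the identity arrow of (a, α) is a Ramsey arrow in ↑𝔠. -/
import Mathlib


open CategoryTheory

universe v u

/-- Objects of the arrow extension `↑𝔠` of a category `𝔠`: the arrows `α : a ⟶ a'`
of `𝔠`, recorded as pairs `(a, α)`. -/
structure ArrowObj (C : Type u) [Category.{v} C] where
  dom : C
  cod : C
  arr : dom ⟶ cod

/-- The arrow extension category `↑𝔠`: an arrow `(a, α) ⟶ (b, β)` is a `𝔠`-arrow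
`f : a ⟶ b` that factors through `α`, or the identity `𝟙 a` when `(a, α) = (b, β)`. -/
instance ArrowObj.category (C : Type u) [Category.{v} C] : Category (ArrowObj C) where
  Hom X Y := {f : X.dom ⟶ Y.dom //
    (∃ f' : X.cod ⟶ Y.dom, f = X.arr ≫ f') ∨ (X = Y ∧ HEq f (𝟙 X.dom))}
  id X := ⟨𝟙 X.dom, Or.inr ⟨rfl, HEq.rfl⟩⟩
  comp {X Y Z} f g := ⟨f.1 ≫ g.1, by
    rcases f.2 with ⟨f', hf⟩ | ⟨hXY, hf⟩
    · exact Or.inl ⟨f' ≫ g.1, by rw [hf, Category.assoc]⟩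
    · subst hXY
      have hf' : f.1 = 𝟙 X.dom := eq_of_heq hf
      rcases g.2 with ⟨g', hg⟩ | ⟨hXZ, hg⟩
      · exact Or.inl ⟨g', by rw [hf', hg, Category.id_comp]⟩
      · subst hXZ
        have hg' : g.1 = 𝟙 X.dom := eq_of_heq hg
        exact Or.inr ⟨rfl, heq_of_eq (by rw [hf', hg', Category.id_comp])⟩⟩
  id_comp f := Subtype.ext (Category.id_comp f.1)
  comp_id f := Subtype.ext (Category.comp_id f.1)
  assoc f g h := Subtype.ext (Category.assoc f.1 g.1 h.1)

/-- `𝔖(α, b)`: the set of arrows `a ⟶ b` of the form `f ∘ α` with `f : a' ⟶ b`. -/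
def HomThrough {C : Type*} [Category C] {a a' : C} (α : a ⟶ a') (b : C) :
    Set (a ⟶ b) :=
  {h | ∃ f : a' ⟶ b, h = α ≫ f}

/-- `α : a ⟶ a'` is a Ramsey arrow. -/
def IsRamseyArrow {C : Type*} [Category C] {a a' : C} (α : a ⟶ a') : Prop :=
  ∀ (b : C) (k : ℕ) (F : Finset (a ⟶ b)), (F : Set (a ⟶ b)) ⊆ HomThrough α b →
    ∃ v : C, ∀ φ : HomThrough α v → Fin k,
      ∃ e : b ⟶ v, ∀ f ∈ F, ∀ g ∈ F,
        ∀ (hf : f ≫ e ∈ HomThrough α v) (hg : g ≫ e ∈ HomThrough α v),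
          φ ⟨f ≫ e, hf⟩ = φ ⟨g ≫ e, hg⟩

/-- A `𝔠`-arrow `α : a ⟶ a'` is a Ramsey arrow in `𝔠` iff `(a, α)` is a Ramsey object
of the arrow extension `↑𝔠`, i.e. its identity arrow is a Ramsey arrow in `↑𝔠`. -/
theorem isRamseyArrow_iff_arrowObj_ramsey {C : Type u} [Category.{v} C]
    {a a' : C} (α : a ⟶ a') :
    IsRamseyArrow α ↔ IsRamseyArrow (𝟙 (ArrowObj.mk a a' α)) := by
  classical
  constructor
  · -- forward direction
    intro hα B k F _hFsub
    have hsub : ((F.image (fun f => f.1 ≫ B.arr) : Finset (a ⟶ B.cod)) : Set (a ⟶ B.cod))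
        ⊆ HomThrough α B.cod := by
      intro h hh
      simp only [Finset.coe_image, Set.mem_image, Finset.mem_coe] at hh
      obtain ⟨f, hfF, rfl⟩ := hh
      rcases f.2 with ⟨f', hf'⟩ | ⟨hXB, hf'⟩
      · exact ⟨f' ≫ B.arr, by rw [hf', Category.assoc]⟩
      · have hB : B = ArrowObj.mk a a' α := hXB.symm
        subst hB
        have : f.1 = 𝟙 a := eq_of_heq hf'
        exact ⟨𝟙 a', by simp [this]⟩
    obtain ⟨v, hv⟩ := hα B.cod k (F.image (fun f => f.1 ≫ B.arr)) hsub
    refine ⟨ArrowObj.mk v v (𝟙 v), ?_⟩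
    intro φ
    have memAll : ∀ (h : ArrowObj.mk a a' α ⟶ ArrowObj.mk v v (𝟙 v)),
        h ∈ HomThrough (𝟙 (ArrowObj.mk a a' α)) (ArrowObj.mk v v (𝟙 v)) :=
      fun h => ⟨h, (Category.id_comp h).symm⟩
    obtain ⟨e₀, he₀⟩ := hv (fun h => φ ⟨⟨h.1, Or.inl h.2⟩, memAll _⟩)
    refine ⟨⟨B.arr ≫ e₀, Or.inl ⟨e₀, rfl⟩⟩, ?_⟩
    intro f hfF g hgF hf hg
    have hfm : f.1 ≫ B.arr ∈ F.image (fun f => f.1 ≫ B.arr) :=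
      Finset.mem_image.2 ⟨f, hfF, rfl⟩
    have hgm : g.1 ≫ B.arr ∈ F.image (fun f => f.1 ≫ B.arr) :=
      Finset.mem_image.2 ⟨g, hgF, rfl⟩
    have hf1 : (f.1 ≫ B.arr) ≫ e₀ ∈ HomThrough α v := by
      obtain ⟨w, hw⟩ := hsub (Finset.mem_coe.2 hfm)
      exact ⟨w ≫ e₀, by rw [hw, Category.assoc]⟩
    have hg1 : (g.1 ≫ B.arr) ≫ e₀ ∈ HomThrough α v := by
      obtain ⟨w, hw⟩ := hsub (Finset.mem_coe.2 hgm)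
      exact ⟨w ≫ e₀, by rw [hw, Category.assoc]⟩
    have key := he₀ _ hfm _ hgm hf1 hg1
    have ef : (⟨f ≫ ⟨B.arr ≫ e₀, Or.inl ⟨e₀, rfl⟩⟩, hf⟩ :
          HomThrough (𝟙 (ArrowObj.mk a a' α)) (ArrowObj.mk v v (𝟙 v))) =
        ⟨⟨(f.1 ≫ B.arr) ≫ e₀, Or.inl hf1⟩, memAll _⟩ :=
      Subtype.ext (Subtype.ext (Category.assoc f.1 B.arr e₀).symm)
    have eg : (⟨g ≫ ⟨B.arr ≫ e₀, Or.inl ⟨e₀, rfl⟩⟩, hg⟩ :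
          HomThrough (𝟙 (ArrowObj.mk a a' α)) (ArrowObj.mk v v (𝟙 v))) =
        ⟨⟨(g.1 ≫ B.arr) ≫ e₀, Or.inl hg1⟩, memAll _⟩ :=
      Subtype.ext (Subtype.ext (Category.assoc g.1 B.arr e₀).symm)
    rw [ef, eg]
    exact key
  · -- backward direction
    intro hup b k F hFsub
    rcases Nat.eq_zero_or_pos k with rfl | hk
    · refine ⟨b, fun φ => ⟨𝟙 b, fun f hf g hg hf' hg' => ?_⟩⟩
      exact absurd (φ ⟨f ≫ 𝟙 b, hf'⟩).2 (by omega)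
    · have hsub : ((F.attach.image
            (fun f => (⟨f.1, Or.inl (hFsub f.2)⟩ : ArrowObj.mk a a' α ⟶ ArrowObj.mk b b (𝟙 b)))) :
            Set (ArrowObj.mk a a' α ⟶ ArrowObj.mk b b (𝟙 b)))
          ⊆ HomThrough (𝟙 (ArrowObj.mk a a' α)) (ArrowObj.mk b b (𝟙 b)) :=
        fun h _ => ⟨h, (Category.id_comp h).symm⟩
      obtain ⟨V, hV⟩ := hup (ArrowObj.mk b b (𝟙 b)) k _ hsub
      refine ⟨V.dom, ?_⟩
      intro φ
      obtain ⟨e, he⟩ := hV (fun h =>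
        if hm : h.1.1 ∈ HomThrough α V.dom then φ ⟨h.1.1, hm⟩ else ⟨0, hk⟩)
      refine ⟨e.1, ?_⟩
      intro f hfF g hgF hf hg
      have hfm : (⟨f, Or.inl (hFsub hfF)⟩ : ArrowObj.mk a a' α ⟶ ArrowObj.mk b b (𝟙 b)) ∈
          F.attach.image (fun f => (⟨f.1, Or.inl (hFsub f.2)⟩ :
            ArrowObj.mk a a' α ⟶ ArrowObj.mk b b (𝟙 b))) :=
        Finset.mem_image.2 ⟨⟨f, hfF⟩, Finset.mem_attach _ _, rfl⟩
      have hgm : (⟨g, Or.inl (hFsub hgF)⟩ : ArrowObj.mk a a' α ⟶ ArrowObj.mk b b (𝟙 b)) ∈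
          F.attach.image (fun f => (⟨f.1, Or.inl (hFsub f.2)⟩ :
            ArrowObj.mk a a' α ⟶ ArrowObj.mk b b (𝟙 b))) :=
        Finset.mem_image.2 ⟨⟨g, hgF⟩, Finset.mem_attach _ _, rfl⟩
      have key := he _ hfm _ hgm ⟨_, (Category.id_comp _).symm⟩ ⟨_, (Category.id_comp _).symm⟩
      have ef : (if hm : f ≫ e.1 ∈ HomThrough α V.dom then φ ⟨f ≫ e.1, hm⟩ else ⟨0, hk⟩)
          = φ ⟨f ≫ e.1, hf⟩ := dif_pos hf
      have eg : (if hm : g ≫ e.1 ∈ HomThrough α V.dom then φ ⟨g ≫ e.1, hm⟩ else ⟨0, hk⟩)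
          = φ ⟨g ≫ e.1, hg⟩ := dif_pos hg
      rw [← ef, ← eg]
      exact key
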